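/- arXiv:2109.10207 — 4 statements merged into one kernel-verified Lean document; each statement's English description precedes it below -/
import Mathlib

section
/- Let F : [0,T] → ℝ^{n×n} be continuously differentiable and satisfy the matrix differential equation F'(t) = L_A(F(t)) + Π(F(t)) for all t ∈ [0,T], with symmetric initial value F(0) = X₀. If the matrix K is positive semidefinite, then there exist real constants c_low and c_up such that for all t ∈ [0,T], in the Loewner order, exp(At) X₀ exp(Aᵀt) + c_low · ∫₀ᵗ exp(As) Π(I) exp(Aᵀs) ds ≼ F(t) ≼ exp(At) X₀ exp(Aᵀt) + c_up · ∫₀ᵗ exp(As) Π(I) exp(Aᵀs) ds. -/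
open Matrix MeasureTheory

/-- The matrix exponential over `ℝ`. -/
noncomputable def mexp {ι : Type*} [Fintype ι] [DecidableEq ι] (A : Matrix ι ι ℝ) :
    Matrix ι ι ℝ := NormedSpace.exp A

/-- The Lyapunov operator `L_A(X) = A X + X Aᵀ`. -/
def LyapL {n : ℕ} (A X : Matrix (Fin n) (Fin n) ℝ) : Matrix (Fin n) (Fin n) ℝ :=
  A * X + X * Aᵀ

/-- The operator `Π(X) = Σ_{i,j} k_{ij} N_i X N_jᵀ`. -/
def PiOp {n q : ℕ} (K : Matrix (Fin q) (Fin q) ℝ) (N : Fin q → Matrix (Fin n) (Fin n) ℝ)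
    (X : Matrix (Fin n) (Fin n) ℝ) : Matrix (Fin n) (Fin n) ℝ :=
  ∑ i, ∑ j, K i j • (N i * X * (N j)ᵀ)

/-- Entrywise interval integral of a matrix-valued function. -/
noncomputable def mInt {a b : ℕ} (s t : ℝ) (F : ℝ → Matrix (Fin a) (Fin b) ℝ) :
    Matrix (Fin a) (Fin b) ℝ :=
  Matrix.of fun i j => ∫ u in s..t, F u i j

/-!
Both `F` and `Fᵀ` solve the same linear equation, so `F` is symmetric, and by compactness
`-c I ≼ F(s) ≼ c I` on `[0,T]`. The integral `W(t) = ∫₀ᵗ exp(As) Π(I) exp(Aᵀs) ds` solves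
`W' = L_A(W) + Π(I)`, so `G = ±F + c W` solves `G' = L_A(G) + Π(±F + c I)`, whose forcing term
is positive semidefinite because `K` is (`Π(X) = Σₖ Mₖ X Mₖᵀ` with `K = Bᵀ B`, `Mₖ = Σᵢ Bₖᵢ Nᵢ`).
For such `G`, the conjugate `exp(-As) G(s) exp(-Aᵀs)` has a positive semidefinite derivative, hence
is Loewner-increasing, which gives `exp(At) G(0) exp(Aᵀt) ≼ G(t)`.
-/

open scoped MatrixOrder
open Set

attribute [local instance] Matrix.linftyOpNormedAddCommGroup Matrix.linftyOpNormedSpace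
  Matrix.linftyOpNormedRing Matrix.linftyOpNormedAlgebra

section MatrixCalculus

variable {m ι : Type*} [Fintype m] [Fintype ι]

theorem hasDerivAt_matrix_iff {f : ℝ → Matrix m ι ℝ} {f' : Matrix m ι ℝ} {t : ℝ} :
    HasDerivAt f f' t ↔ ∀ i j, HasDerivAt (fun s => f s i j) (f' i j) t := by
  let e : Matrix m ι ℝ →L[ℝ] (m → ι → ℝ) :=
    LinearMap.toContinuousLinearMap (Matrix.ofLinearEquiv ℝ).symm.toLinearMap
  let e' : (m → ι → ℝ) →L[ℝ] Matrix m ι ℝ :=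
    LinearMap.toContinuousLinearMap (Matrix.ofLinearEquiv ℝ).toLinearMap
  refine ⟨fun h i j => ?_, fun h => ?_⟩
  · have h' := e.hasFDerivAt.comp_hasDerivAt (f := f) t h
    exact hasDerivAt_pi.1 (hasDerivAt_pi.1 h' i) j
  · have h' : HasDerivAt (fun s i j => f s i j) (fun i j => f' i j) t :=
      hasDerivAt_pi.2 fun i => hasDerivAt_pi.2 (h i)
    exact e'.hasFDerivAt.comp_hasDerivAt (f := fun s i j => f s i j) t h'

theorem HasDerivAt.matrix_transpose {f : ℝ → Matrix m ι ℝ} {f' : Matrix m ι ℝ} {t : ℝ}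
    (hf : HasDerivAt f f' t) : HasDerivAt (fun s => (f s)ᵀ) f'ᵀ t :=
  hasDerivAt_matrix_iff.2 fun i j => hasDerivAt_matrix_iff.1 hf j i

theorem isHermitian_sub_of_hasDerivAt {σ σ' : ℝ → Matrix ι ι ℝ} {a b : ℝ}
    (hσ : ∀ s ∈ Icc a b, HasDerivAt σ (σ' s) s) (hσ' : ∀ s ∈ Icc a b, (σ' s).IsHermitian)
    {s t : ℝ} (hs : s ∈ Icc a b) (ht : t ∈ Icc a b) : (σ t - σ s).IsHermitian := by
  have hanti : ∀ i j, ∀ u ∈ Icc a b, σ u i j - σ u j i = σ a i j - σ a j i := by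
    intro i j
    have hd : ∀ u ∈ Icc a b, HasDerivAt (fun u => σ u i j - σ u j i) 0 u := fun u hu => by
      have hsymm : σ' u j i = σ' u i j := by simpa using (hσ' u hu).apply i j
      simpa [hsymm] using (hasDerivAt_matrix_iff.1 (hσ u hu) i j).fun_sub
        (hasDerivAt_matrix_iff.1 (hσ u hu) j i)
    exact constant_of_has_deriv_right_zero
      (fun u hu => (hd u hu).continuousAt.continuousWithinAt)
      fun u hu => (hd u (Ico_subset_Icc_self hu)).hasDerivWithinAt
  ext i j
  have := hanti i j s hs
  have := hanti i j t ht
  simp only [conjTranspose_apply, Matrix.sub_apply, star_trivial]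
  linarith

theorem monotoneOn_of_hasDerivAt_posSemidef {σ σ' : ℝ → Matrix ι ι ℝ} {a b : ℝ}
    (hσ : ∀ s ∈ Icc a b, HasDerivAt σ (σ' s) s) (hσ' : ∀ s ∈ Icc a b, (σ' s).PosSemidef) :
    MonotoneOn σ (Icc a b) := by
  intro s hs t ht hst
  refine Matrix.le_iff.2 (.of_dotProduct_mulVec_nonneg
    (isHermitian_sub_of_hasDerivAt hσ (fun u hu => (hσ' u hu).isHermitian) hs ht) fun x => ?_)
  let q : Matrix ι ι ℝ →L[ℝ] ℝ := LinearMap.toContinuousLinearMap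
    { toFun M := x ⬝ᵥ M *ᵥ x
      map_add' M M' := by simp [add_mulVec, dotProduct_add]
      map_smul' c M := by simp [smul_mulVec, dotProduct_smul] }
  have hq : ∀ u ∈ Icc a b, HasDerivAt (fun u => q (σ u)) (q (σ' u)) u :=
    fun u hu => q.hasFDerivAt.comp_hasDerivAt u (hσ u hu)
  have hmono : MonotoneOn (fun u => q (σ u)) (Icc a b) := by
    refine monotoneOn_of_hasDerivWithinAt_nonneg (convex_Icc a b)
      (fun u hu => (hq u hu).continuousAt.continuousWithinAt)
      (fun u hu => (hq u (interior_subset hu)).hasDerivWithinAt) fun u hu => ?_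
    change 0 ≤ x ⬝ᵥ σ' u *ᵥ x
    simpa using (hσ' u (interior_subset hu)).dotProduct_mulVec_nonneg x
  simpa [q, sub_mulVec] using hmono hs ht hst

theorem Matrix.posSemidef_add_smul_one_of_sum_abs_le [DecidableEq ι] {M : Matrix ι ι ℝ}
    (hM : M.IsHermitian) {c : ℝ} (hc : ∑ i, ∑ j, |M i j| ≤ c) : (M + c • 1).PosSemidef := by
  have hH : (M + c • 1).IsHermitian := hM.add (isHermitian_one.smul (IsSelfAdjoint.all c))
  rw [hH.posSemidef_iff_eigenvalues_nonneg]
  intro k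
  have hμ : Module.End.HasEigenvalue (toLin' (M + c • 1)) (hH.eigenvalues k) := by
    rw [Module.End.hasEigenvalue_iff_mem_spectrum, Matrix.spectrum_toLin']
    exact hH.eigenvalues_mem_spectrum_real k
  obtain ⟨i, hi⟩ := eigenvalue_mem_ball hμ
  have hoff : ∑ j ∈ Finset.univ.erase i, ‖(M + c • 1) i j‖ =
      ∑ j ∈ Finset.univ.erase i, |M i j| :=
    Finset.sum_congr rfl fun j hj => by simp [one_apply_ne (Finset.ne_of_mem_erase hj).symm]
  have hrow : |M i i| + ∑ j ∈ Finset.univ.erase i, |M i j| ≤ c :=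
    (Finset.add_sum_erase _ _ (Finset.mem_univ i)).le.trans
      ((Finset.single_le_sum (fun i _ => Finset.sum_nonneg fun j _ => abs_nonneg (M i j))
        (Finset.mem_univ i)).trans hc)
  rw [Metric.mem_closedBall, Real.dist_eq, hoff] at hi
  simp only [add_apply, smul_apply, one_apply_eq, smul_eq_mul, mul_one] at hi
  have := neg_abs_le (M i i)
  have := (abs_le.1 hi).1
  simp only [Pi.zero_apply]
  linarith

theorem IsCompact.exists_posSemidef_add_smul_one [DecidableEq ι] {X : Type*}
    [TopologicalSpace X] {S : Set X} (hS : IsCompact S) {F : X → Matrix ι ι ℝ}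
    (hF : ∀ i j, ContinuousOn (fun x => F x i j) S) (hFH : ∀ x ∈ S, (F x).IsHermitian) :
    ∃ c : ℝ, ∀ x ∈ S, (F x + c • 1).PosSemidef ∧ (-F x + c • 1).PosSemidef := by
  obtain ⟨c, hc⟩ := hS.bddAbove_image (f := fun x => ∑ i, ∑ j, |F x i j|)
    (continuousOn_finsetSum _ fun i _ => continuousOn_finsetSum _ fun j _ => (hF i j).abs)
  refine ⟨c, fun x hx => ⟨?_, ?_⟩⟩
  · exact posSemidef_add_smul_one_of_sum_abs_le (hFH x hx) (hc ⟨x, hx, rfl⟩)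
  · refine posSemidef_add_smul_one_of_sum_abs_le (hFH x hx).neg ?_
    simpa using hc ⟨x, hx, rfl⟩

end MatrixCalculus

section MatrixExp

variable {ι : Type*} [Fintype ι] [DecidableEq ι]

theorem mexp_smul_transpose (t : ℝ) (A : Matrix ι ι ℝ) : mexp (t • Aᵀ) = (mexp (t • A))ᴴ := by
  rw [conjTranspose_eq_transpose_of_trivial, ← transpose_smul]
  exact Matrix.exp_transpose _

theorem mexp_smul_mul_mexp_smul_neg (t : ℝ) (A : Matrix ι ι ℝ) :
    mexp (t • A) * mexp (t • -A) = 1 := by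
  have hcomm : Commute (t • A) (t • -A) := ((Commute.refl A).neg_right.smul_left t).smul_right t
  rw [mexp, mexp, ← Matrix.exp_add_of_commute _ _ hcomm, smul_neg, add_neg_cancel,
    NormedSpace.exp_zero]

end MatrixExp

section Operators

variable {n q : ℕ}

variable (A : Matrix (Fin n) (Fin n) ℝ) (K : Matrix (Fin q) (Fin q) ℝ)
  (N : Fin q → Matrix (Fin n) (Fin n) ℝ) (X Y : Matrix (Fin n) (Fin n) ℝ) (c : ℝ)

theorem lyapL_add : LyapL A (X + Y) = LyapL A X + LyapL A Y := by
  simp only [LyapL, Matrix.mul_add, Matrix.add_mul]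
  abel

theorem lyapL_smul : LyapL A (c • X) = c • LyapL A X := by
  simp only [LyapL, Matrix.mul_smul, Matrix.smul_mul, smul_add]

theorem lyapL_transpose : (LyapL A X)ᵀ = LyapL A Xᵀ := by
  simp only [LyapL, transpose_add, transpose_mul, transpose_transpose]
  abel

theorem piOp_add : PiOp K N (X + Y) = PiOp K N X + PiOp K N Y := by
  simp only [PiOp, Matrix.mul_add, Matrix.add_mul, smul_add, Finset.sum_add_distrib]

theorem piOp_smul : PiOp K N (c • X) = c • PiOp K N X := by
  simp only [PiOp, Matrix.mul_smul, Matrix.smul_mul, Finset.smul_sum, smul_comm c]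

theorem piOp_transpose {K} (hK : K.IsSymm) : (PiOp K N X)ᵀ = PiOp K N Xᵀ := by
  simp only [PiOp, transpose_sum, transpose_smul, transpose_mul, transpose_transpose,
    ← mul_assoc]
  rw [Finset.sum_comm]
  simp only [hK.apply]

theorem piOp_transpose_mul_self (B : Matrix (Fin q) (Fin q) ℝ) :
    PiOp (Bᵀ * B) N X = ∑ k, (∑ i, B k i • N i) * X * (∑ j, B k j • N j)ᵀ := by
  simp only [PiOp, mul_apply, transpose_apply, Finset.sum_smul, transpose_sum, transpose_smul,
    Finset.sum_mul, Finset.mul_sum, Matrix.smul_mul, Matrix.mul_smul, smul_smul]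
  conv_lhs => rw [Finset.sum_comm]
  conv_rhs => rw [Finset.sum_comm]
  refine Finset.sum_congr rfl fun b _ => ?_
  rw [Finset.sum_comm]
  exact Finset.sum_congr rfl fun k _ => Finset.sum_congr rfl fun a _ => by rw [mul_comm]

def lyapPiₗ : Matrix (Fin n) (Fin n) ℝ →ₗ[ℝ] Matrix (Fin n) (Fin n) ℝ where
  toFun X := LyapL A X + PiOp K N X
  map_add' X Y := by rw [lyapL_add, piOp_add]; abel
  map_smul' c X := by rw [lyapL_smul, piOp_smul, smul_add]; rfl

variable {A K N X}

theorem Matrix.PosSemidef.piOp (hK : K.PosSemidef) (N : Fin q → Matrix (Fin n) (Fin n) ℝ)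
    (hX : X.PosSemidef) : (PiOp K N X).PosSemidef := by
  obtain ⟨B, rfl⟩ := CStarAlgebra.nonneg_iff_eq_star_mul_self.mp hK.nonneg
  rw [star_eq_conjTranspose, conjTranspose_eq_transpose_of_trivial, piOp_transpose_mul_self]
  exact posSemidef_sum _ fun k _ => by
    simpa [conjTranspose_eq_transpose_of_trivial] using
      hX.mul_mul_conjTranspose_same (∑ i, B k i • N i)

end Operators

section LyapunovEquation

variable {n q : ℕ}

theorem hasDerivAt_mexp_conj (B : Matrix (Fin n) (Fin n) ℝ) {F : ℝ → Matrix (Fin n) (Fin n) ℝ}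
    {F' : Matrix (Fin n) (Fin n) ℝ} {s : ℝ} (hF : HasDerivAt F F' s) :
    HasDerivAt (fun u => mexp (u • B) * F u * mexp (u • Bᵀ))
      (LyapL B (mexp (s • B) * F s * mexp (s • Bᵀ)) + mexp (s • B) * F' * mexp (s • Bᵀ)) s := by
  refine (((hasDerivAt_exp_smul_const' B s).fun_mul hF).fun_mul
    (hasDerivAt_exp_smul_const Bᵀ s)).congr_deriv ?_
  simp only [LyapL, add_mul, mul_assoc]
  exact add_right_comm _ _ _

theorem mexp_conj_lyapL (B : Matrix (Fin n) (Fin n) ℝ) (s : ℝ) (X : Matrix (Fin n) (Fin n) ℝ) :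
    mexp (s • B) * LyapL B X * mexp (s • Bᵀ) = LyapL B (mexp (s • B) * X * mexp (s • Bᵀ)) := by
  have h₁ : Commute B (mexp (s • B)) := ((Commute.refl B).smul_right s).exp_right
  have h₂ : Commute Bᵀ (mexp (s • Bᵀ)) := ((Commute.refl Bᵀ).smul_right s).exp_right
  simp only [LyapL, Matrix.mul_add, Matrix.add_mul, ← mul_assoc, h₁.eq]
  rw [mul_assoc _ Bᵀ, h₂.eq, ← mul_assoc]

theorem mexp_conj_le_of_hasDerivAt_lyapL_add {A : Matrix (Fin n) (Fin n) ℝ}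
    {F R : ℝ → Matrix (Fin n) (Fin n) ℝ} {T : ℝ}
    (hF : ∀ s ∈ Icc 0 T, HasDerivAt F (LyapL A (F s) + R s) s)
    (hR : ∀ s ∈ Icc 0 T, (R s).PosSemidef) :
    ∀ t ∈ Icc 0 T, mexp (t • A) * F 0 * mexp (t • Aᵀ) ≤ F t := by
  set σ := fun s => mexp (s • -A) * F s * mexp (s • (-A)ᵀ)
  have hσ : ∀ s ∈ Icc 0 T, HasDerivAt σ (mexp (s • -A) * R s * mexp (s • (-A)ᵀ)) s :=
    fun s hs => (hasDerivAt_mexp_conj (-A) (hF s hs)).congr_deriv <| by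
      have hcancel : LyapL (-A) (F s) + (LyapL A (F s) + R s) = R s := by
        simp only [LyapL, transpose_neg, neg_mul, mul_neg]
        abel
      rw [← mexp_conj_lyapL, ← add_mul, ← mul_add, hcancel]
  have hmono := monotoneOn_of_hasDerivAt_posSemidef hσ fun s hs => by
    rw [mexp_smul_transpose]
    exact (hR s hs).mul_mul_conjTranspose_same _
  intro t ht
  have h0t := star_right_conjugate_le_conjugate
    (hmono ⟨le_rfl, ht.1.trans ht.2⟩ ht ht.1) (mexp (t • A))
  rw [star_eq_conjTranspose, ← mexp_smul_transpose] at h0t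
  convert h0t using 1
  · simp [σ, mexp]
  · have h := mexp_smul_mul_mexp_smul_neg t (-Aᵀ)
    rw [neg_neg] at h
    simp only [σ, ← mul_assoc, mexp_smul_mul_mexp_smul_neg, one_mul]
    rw [mul_assoc, transpose_neg, h, mul_one]

theorem hasDerivAt_mInt_mexp_conj (A P : Matrix (Fin n) (Fin n) ℝ) (t : ℝ) :
    HasDerivAt (fun t => mInt 0 t fun s => mexp (s • A) * P * mexp (s • Aᵀ))
      (LyapL A (mInt 0 t fun s => mexp (s • A) * P * mexp (s • Aᵀ)) + P) t := by
  set g := fun s : ℝ => mexp (s • A) * P * mexp (s • Aᵀ)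
  set W := fun t => mInt 0 t g
  have hg : ∀ s, HasDerivAt g (LyapL A (g s)) s := fun s => by
    simpa using hasDerivAt_mexp_conj A (hasDerivAt_const s P)
  have hW : ∀ t, HasDerivAt W (g t) t := fun t => hasDerivAt_matrix_iff.2 fun i j => by
    have hgij : Continuous fun s => g s i j := continuous_iff_continuousAt.2 fun s =>
      (hasDerivAt_matrix_iff.1 (hg s) i j).continuousAt
    exact (hgij.integral_hasStrictDerivAt 0 t).hasDerivAt
  have hZ : ∀ t, HasDerivAt (fun t => LyapL A (W t) + P - g t) 0 t := fun t =>
    (((((hW t).const_mul A).add ((hW t).mul_const Aᵀ)).add_const P).sub (hg t)).congr_deriv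
      (sub_self _)
  have hW0 : W 0 = 0 := by ext i j; simp [W, mInt]
  have hZ0 : LyapL A (W 0) + P - g 0 = 0 := by simp [hW0, g, LyapL, mexp]
  refine (hW t).congr_deriv ?_
  have := is_const_of_deriv_eq_zero (fun t => (hZ t).differentiableAt) (fun t => (hZ t).deriv) t 0
  rw [hZ0, sub_eq_zero] at this
  exact this.symm

theorem isSymm_of_hasDerivAt_lyapL_add_piOp {A : Matrix (Fin n) (Fin n) ℝ}
    {K : Matrix (Fin q) (Fin q) ℝ} (hK : K.IsSymm) {N : Fin q → Matrix (Fin n) (Fin n) ℝ}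
    {F : ℝ → Matrix (Fin n) (Fin n) ℝ} {T : ℝ} (hF0 : (F 0).IsSymm)
    (hF : ∀ t ∈ Icc 0 T, HasDerivAt F (LyapL A (F t) + PiOp K N (F t)) t) :
    ∀ t ∈ Icc 0 T, (F t).IsSymm := by
  let V := LinearMap.toContinuousLinearMap (lyapPiₗ A K N)
  have hFt : ∀ t ∈ Icc 0 T, HasDerivAt (fun s => (F s)ᵀ) (V (F t)ᵀ) t := fun t ht =>
    (hF t ht).matrix_transpose.congr_deriv <| by
      rw [transpose_add, lyapL_transpose, piOp_transpose _ _ hK]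
      rfl
  intro t ht
  exact ODE_solution_unique (v := fun _ => V) (fun _ => V.lipschitz)
    (fun s hs => (hFt s hs).continuousAt.continuousWithinAt)
    (fun s hs => (hFt s (Ico_subset_Icc_self hs)).hasDerivWithinAt)
    (fun s hs => (hF s hs).continuousAt.continuousWithinAt)
    (fun s hs => (hF s (Ico_subset_Icc_self hs)).hasDerivWithinAt) hF0 ht

theorem mexp_conj_le_add_smul_mInt {A : Matrix (Fin n) (Fin n) ℝ}
    {K : Matrix (Fin q) (Fin q) ℝ} (hK : K.PosSemidef) {N : Fin q → Matrix (Fin n) (Fin n) ℝ}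
    {F : ℝ → Matrix (Fin n) (Fin n) ℝ} {T c : ℝ}
    (hF : ∀ t ∈ Icc 0 T, HasDerivAt F (LyapL A (F t) + PiOp K N (F t)) t)
    (hc : ∀ t ∈ Icc 0 T, (F t + c • 1).PosSemidef) :
    ∀ t ∈ Icc 0 T, mexp (t • A) * F 0 * mexp (t • Aᵀ) ≤
      F t + c • mInt 0 t fun s => mexp (s • A) * PiOp K N 1 * mexp (s • Aᵀ) := by
  set W := fun t => mInt 0 t fun s => mexp (s • A) * PiOp K N 1 * mexp (s • Aᵀ)
  have hW0 : W 0 = 0 := by ext i j; simp [W, mInt]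
  have hG : ∀ t ∈ Icc 0 T, HasDerivAt (fun s => F s + c • W s)
      (LyapL A (F t + c • W t) + PiOp K N (F t + c • 1)) t := fun t ht =>
    ((hF t ht).add ((hasDerivAt_mInt_mexp_conj A (PiOp K N 1) t).const_smul c)).congr_deriv <| by
      rw [lyapL_add, lyapL_smul, piOp_add, piOp_smul, smul_add]
      abel
  simpa [hW0] using mexp_conj_le_of_hasDerivAt_lyapL_add hG fun t ht => hK.piOp N (hc t ht)

end LyapunovEquation

theorem thm_4_1_general {n q : ℕ} (T : ℝ)
    (A : Matrix (Fin n) (Fin n) ℝ) (N : Fin q → Matrix (Fin n) (Fin n) ℝ)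
    (K : Matrix (Fin q) (Fin q) ℝ) (hK : K.PosSemidef)
    (X₀ : Matrix (Fin n) (Fin n) ℝ) (hX₀ : X₀.IsSymm)
    (F : ℝ → Matrix (Fin n) (Fin n) ℝ) (hF0 : F 0 = X₀)
    (hF : ∀ t ∈ Set.Icc (0:ℝ) T, ∀ i j,
      HasDerivAt (fun s => F s i j) ((LyapL A (F t) + PiOp K N (F t)) i j) t) :
    ∃ cLow cUp : ℝ, ∀ t ∈ Set.Icc (0:ℝ) T,
      (F t - (mexp (t • A) * X₀ * mexp (t • Aᵀ) +
        cLow • mInt 0 t (fun s => mexp (s • A) * PiOp K N 1 * mexp (s • Aᵀ)))).PosSemidef ∧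
      ((mexp (t • A) * X₀ * mexp (t • Aᵀ) +
        cUp • mInt 0 t (fun s => mexp (s • A) * PiOp K N 1 * mexp (s • Aᵀ))) - F t).PosSemidef := by
  have hFd : ∀ t ∈ Icc 0 T, HasDerivAt F (LyapL A (F t) + PiOp K N (F t)) t :=
    fun t ht => hasDerivAt_matrix_iff.2 (hF t ht)
  have hFneg : ∀ t ∈ Icc 0 T, HasDerivAt (fun s => -F s) (LyapL A (-F t) + PiOp K N (-F t)) t :=
    fun t ht => (hFd t ht).neg.congr_deriv ((lyapPiₗ A K N).map_neg (F t)).symm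
  have hsymm := isSymm_of_hasDerivAt_lyapL_add_piOp
    (isHermitian_iff_isSymm.1 hK.isHermitian) (hF0 ▸ hX₀) hFd
  obtain ⟨c, hc⟩ := isCompact_Icc.exists_posSemidef_add_smul_one
    (fun i j s hs => (hF s hs i j).continuousAt.continuousWithinAt)
    fun s hs => isHermitian_iff_isSymm.2 (hsymm s hs)
  refine ⟨-c, c, fun t ht => ⟨?_, ?_⟩⟩
  · have hlow := mexp_conj_le_add_smul_mInt hK hFd (fun s hs => (hc s hs).1) t ht
    rw [hF0, Matrix.le_iff] at hlow
    rwa [neg_smul, sub_add_eq_sub_sub, sub_neg_eq_add, sub_add_eq_add_sub]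
  · have hup := mexp_conj_le_add_smul_mInt hK hFneg (fun s hs => (hc s hs).2) t ht
    rwa [hF0, Matrix.le_iff, mul_neg, neg_mul, sub_neg_eq_add, add_comm, add_comm (-F t),
      ← sub_eq_add_neg, ← add_sub_assoc] at hup

/-- **Theorem 4.1.** If `F` solves `F' = L_A(F) + Π(F)` on `[0,T]` with symmetric
initial value `X₀`, and `K` is positive semidefinite, then there exist constants
`c_low, c_up` such that, in the Loewner order, for all `t ∈ [0,T]`,
`exp(At) X₀ exp(Aᵀt) + c_low ∫₀ᵗ exp(As) Π(I) exp(Aᵀs) ds ≼ F(t)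
  ≼ exp(At) X₀ exp(Aᵀt) + c_up ∫₀ᵗ exp(As) Π(I) exp(Aᵀs) ds`. -/
theorem thm_4_1 {n q : ℕ} (T : ℝ) (hT : 0 < T)
    (A : Matrix (Fin n) (Fin n) ℝ) (N : Fin q → Matrix (Fin n) (Fin n) ℝ)
    (K : Matrix (Fin q) (Fin q) ℝ) (hK : K.PosSemidef)
    (X₀ : Matrix (Fin n) (Fin n) ℝ) (hX₀ : X₀.IsSymm)
    (F : ℝ → Matrix (Fin n) (Fin n) ℝ) (hF0 : F 0 = X₀)
    (hF : ∀ t ∈ Set.Icc (0:ℝ) T, ∀ i j,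
      HasDerivAt (fun s => F s i j) ((LyapL A (F t) + PiOp K N (F t)) i j) t) :
    ∃ cLow cUp : ℝ, ∀ t ∈ Set.Icc (0:ℝ) T,
      (F t - (mexp (t • A) * X₀ * mexp (t • Aᵀ) +
        cLow • mInt 0 t (fun s => mexp (s • A) * PiOp K N 1 * mexp (s • Aᵀ)))).PosSemidef ∧
      ((mexp (t • A) * X₀ * mexp (t • Aᵀ) +
        cUp • mInt 0 t (fun s => mexp (s • A) * PiOp K N 1 * mexp (s • Aᵀ))) - F t).PosSemidef :=
  thm_4_1_general T A N K hK X₀ hX₀ F hF0 hF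
end

section
/- Suppose the matrix K = (k_{ij}) ∈ ℝ^{q×q} is symmetric positive semidefinite. Let X ∈ ℝ^{n×n} be symmetric and let λ, μ ∈ ℝ satisfy λ·I ≼ X ≼ μ·I in the Loewner order. Then λ·Π(I) ≼ Π(X) ≼ μ·Π(I), where Π(X) = Σ_{i,j=1}^q k_{ij} N_i X N_jᵀ for given matrices N₁, …, N_q ∈ ℝ^{n×n}. Equivalently, for every vector v ∈ ℝⁿ, λ·vᵀΠ(I)v ≤ vᵀΠ(X)v ≤ μ·vᵀΠ(I)v. -/
open Matrix

/-!
Writing `𝒩 = [N₁ ⋯ N_q]` for the block row of the `N_i`, one has `Π(X) = 𝒩 (K ⊗ X) 𝒩ᵀ`.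
A Kronecker product of positive semidefinite matrices is positive semidefinite, so `Π` is a
positive linear map; applying it to `X - λI ≽ 0` and `μI - X ≽ 0` gives both Loewner bounds,
and the quadratic-form bounds are their evaluations at `v`.
-/

open scoped Kronecker

namespace Matrix

def blockRow {m ι α : Type*} (N : ι → Matrix m m α) : Matrix m (ι × m) α :=
  of fun a p => N p.1 a p.2

lemma PosSemidef.dotProduct_mulVec_le {m : Type*} [Fintype m] {A B : Matrix m m ℝ}
    (h : (A - B).PosSemidef) (v : m → ℝ) : v ⬝ᵥ B *ᵥ v ≤ v ⬝ᵥ A *ᵥ v := by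
  have h_nonneg := h.dotProduct_mulVec_nonneg v
  rwa [star_trivial, sub_mulVec, dotProduct_sub, sub_nonneg] at h_nonneg

end Matrix

section PiOp

variable {n q : ℕ} (K : Matrix (Fin q) (Fin q) ℝ) (N : Fin q → Matrix (Fin n) (Fin n) ℝ)

theorem PiOp_eq_blockRow_mul_kronecker_mul_transpose (X : Matrix (Fin n) (Fin n) ℝ) :
    PiOp K N X = blockRow N * (K ⊗ₖ X) * (blockRow N)ᵀ := by
  ext a b
  simp only [PiOp, blockRow, Matrix.sum_apply, Matrix.smul_apply, mul_apply, transpose_apply,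
    of_apply, kroneckerMap_apply, Fintype.sum_prod_type, Finset.sum_mul, Finset.mul_sum, smul_eq_mul]
  rw [Finset.sum_comm]
  refine Finset.sum_congr rfl fun j _ => ?_
  rw [Finset.sum_comm]
  exact Finset.sum_congr rfl fun l _ => Finset.sum_congr rfl fun i _ =>
    Finset.sum_congr rfl fun k _ => by ring

lemma PiOp_sub (X Y : Matrix (Fin n) (Fin n) ℝ) :
    PiOp K N (X - Y) = PiOp K N X - PiOp K N Y := by
  simp only [PiOp, mul_sub, sub_mul, smul_sub, Finset.sum_sub_distrib]

lemma PiOp_smul (c : ℝ) (X : Matrix (Fin n) (Fin n) ℝ) :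
    PiOp K N (c • X) = c • PiOp K N X := by
  simp only [PiOp, Matrix.mul_smul, Matrix.smul_mul, Finset.smul_sum, smul_comm c]

variable {K} in
theorem PiOp_posSemidef (hK : K.PosSemidef) {X : Matrix (Fin n) (Fin n) ℝ} (hX : X.PosSemidef) :
    (PiOp K N X).PosSemidef := by
  rw [PiOp_eq_blockRow_mul_kronecker_mul_transpose]
  exact (hK.kronecker hX).mul_mul_conjTranspose_same _

end PiOp

theorem PiOp_loewner_monotone_general {n q : ℕ}
    (N : Fin q → Matrix (Fin n) (Fin n) ℝ)
    (K : Matrix (Fin q) (Fin q) ℝ) (hK : K.PosSemidef)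
    (X : Matrix (Fin n) (Fin n) ℝ) (lam mu : ℝ)
    (hlow : (X - lam • (1 : Matrix (Fin n) (Fin n) ℝ)).PosSemidef)
    (hup : (mu • (1 : Matrix (Fin n) (Fin n) ℝ) - X).PosSemidef) :
    ((PiOp K N X - lam • PiOp K N 1).PosSemidef ∧
      (mu • PiOp K N 1 - PiOp K N X).PosSemidef) ∧
    ∀ v : Fin n → ℝ,
      lam * (v ⬝ᵥ (PiOp K N 1).mulVec v) ≤ v ⬝ᵥ (PiOp K N X).mulVec v ∧
      v ⬝ᵥ (PiOp K N X).mulVec v ≤ mu * (v ⬝ᵥ (PiOp K N 1).mulVec v) := by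
  have hlow' : (PiOp K N X - lam • PiOp K N 1).PosSemidef := by
    simpa only [PiOp_sub, PiOp_smul] using PiOp_posSemidef N hK hlow
  have hup' : (mu • PiOp K N 1 - PiOp K N X).PosSemidef := by
    simpa only [PiOp_sub, PiOp_smul] using PiOp_posSemidef N hK hup
  refine ⟨⟨hlow', hup'⟩, fun v => ⟨?_, ?_⟩⟩
  · simpa only [smul_mulVec, dotProduct_smul, smul_eq_mul] using hlow'.dotProduct_mulVec_le v
  · simpa only [smul_mulVec, dotProduct_smul, smul_eq_mul] using hup'.dotProduct_mulVec_le v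

/-- If `K` is symmetric positive semidefinite, `X` is symmetric and
`λ·I ≼ X ≼ μ·I` in the Loewner order, then `λ·Π(I) ≼ Π(X) ≼ μ·Π(I)`;
equivalently `λ·vᵀΠ(I)v ≤ vᵀΠ(X)v ≤ μ·vᵀΠ(I)v` for every vector `v`. -/
theorem PiOp_loewner_monotone {n q : ℕ}
    (N : Fin q → Matrix (Fin n) (Fin n) ℝ)
    (K : Matrix (Fin q) (Fin q) ℝ) (hK : K.PosSemidef)
    (X : Matrix (Fin n) (Fin n) ℝ) (hX : X.IsSymm) (lam mu : ℝ)
    (hlow : (X - lam • (1 : Matrix (Fin n) (Fin n) ℝ)).PosSemidef)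
    (hup : (mu • (1 : Matrix (Fin n) (Fin n) ℝ) - X).PosSemidef) :
    ((PiOp K N X - lam • PiOp K N 1).PosSemidef ∧
      (mu • PiOp K N 1 - PiOp K N X).PosSemidef) ∧
    ∀ v : Fin n → ℝ,
      lam * (v ⬝ᵥ (PiOp K N 1).mulVec v) ≤ v ⬝ᵥ (PiOp K N X).mulVec v ∧
      v ⬝ᵥ (PiOp K N X).mulVec v ≤ mu * (v ⬝ᵥ (PiOp K N 1).mulVec v) :=
  PiOp_loewner_monotone_general N K hK X lam mu hlow hup
end

section
/- Let P, Q ∈ ℝ^{n×n} be symmetric positive definite with factorizations P = K Kᵀ and Q = L Lᵀ where K, L ∈ ℝ^{n×n} are invertible, and let Kᵀ L = V Σ Uᵀ be a singular value decomposition (V, U orthogonal, Σ diagonal with positive diagonal entries). Define S = Σ^{−1/2} Uᵀ Lᵀ and T' = K V Σ^{−1/2}. Then S T' = I (so S is invertible with S⁻¹ = T'), and the transformation balances the two matrices: S P Sᵀ = Σ and (S⁻¹)ᵀ Q S⁻¹ = Σ. -/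
/-!
With `A = Lᵀ K` the SVD reads `A = U Σ Vᵀ`, so `S T' = D (Uᵀ A V) D`, `S P Sᵀ = D (Uᵀ A Aᵀ U) D` and
`T'ᵀ Q T' = D (Vᵀ Aᵀ A V) D` with `D = Σ^{-1/2}`. Orthogonality of `U` and `V` turns the three
middle factors into `Σ`, `Σ²` and `Σ²`, and the outer factors `D` rescale these to `1`, `Σ`, `Σ`.
-/

open Matrix

namespace Matrix

section SVD

variable {n R : Type*} [Fintype n] [DecidableEq n] [CommRing R]
  {A U V : Matrix n n R} {σ : n → R}

theorem transpose_mul_mul_eq_diagonal_of_eq_svd (hU : Uᵀ * U = 1) (hV : Vᵀ * V = 1)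
    (hA : A = U * diagonal σ * Vᵀ) : Uᵀ * A * V = diagonal σ := by
  rw [hA, ← Matrix.mul_assoc, ← Matrix.mul_assoc, hU, Matrix.one_mul, Matrix.mul_assoc, hV,
    Matrix.mul_one]

theorem transpose_mul_mul_transpose_mul_eq_of_eq_svd (hU : Uᵀ * U = 1) (hV : Vᵀ * V = 1)
    (hA : A = U * diagonal σ * Vᵀ) : Uᵀ * (A * Aᵀ) * U = diagonal σ * diagonal σ := by
  have hUA : Uᵀ * A = diagonal σ * Vᵀ := by
    rw [hA, ← Matrix.mul_assoc, ← Matrix.mul_assoc, hU, Matrix.one_mul]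
  calc Uᵀ * (A * Aᵀ) * U = (Uᵀ * A) * (Uᵀ * A)ᵀ := by
        simp only [transpose_mul, transpose_transpose, Matrix.mul_assoc]
    _ = diagonal σ * diagonal σ := by
        rw [hUA, transpose_mul, transpose_transpose, diagonal_transpose, Matrix.mul_assoc,
          ← Matrix.mul_assoc Vᵀ, hV, Matrix.one_mul]

theorem transpose_mul_transpose_mul_mul_eq_of_eq_svd (hU : Uᵀ * U = 1) (hV : Vᵀ * V = 1)
    (hA : A = U * diagonal σ * Vᵀ) : Vᵀ * (Aᵀ * A) * V = diagonal σ * diagonal σ := by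
  have hAV : A * V = U * diagonal σ := by
    rw [hA, Matrix.mul_assoc, hV, Matrix.mul_one]
  calc Vᵀ * (Aᵀ * A) * V = (A * V)ᵀ * (A * V) := by
        simp only [transpose_mul, Matrix.mul_assoc]
    _ = diagonal σ * diagonal σ := by
        rw [hAV, transpose_mul, diagonal_transpose, Matrix.mul_assoc, ← Matrix.mul_assoc Uᵀ, hU,
          Matrix.one_mul]

end SVD

section InvSqrt

variable {n : Type*} [Fintype n] [DecidableEq n] {σ : n → ℝ}

theorem diagonal_inv_sqrt_mul_diagonal_mul_diagonal_inv_sqrt (hσ : ∀ i, 0 < σ i) :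
    diagonal (fun i => (√(σ i))⁻¹) * diagonal σ * diagonal (fun i => (√(σ i))⁻¹) = 1 := by
  rw [diagonal_mul_diagonal, diagonal_mul_diagonal, ← diagonal_one]
  congr 1
  funext i
  have hs : √(σ i) ≠ 0 := (Real.sqrt_pos.2 (hσ i)).ne'
  field_simp
  rw [Real.sq_sqrt (hσ i).le]

theorem diagonal_inv_sqrt_mul_diagonal_sq_mul_diagonal_inv_sqrt (hσ : ∀ i, 0 < σ i) :
    diagonal (fun i => (√(σ i))⁻¹) * (diagonal σ * diagonal σ) *
      diagonal (fun i => (√(σ i))⁻¹) = diagonal σ := by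
  rw [diagonal_mul_diagonal, diagonal_mul_diagonal, diagonal_mul_diagonal]
  congr 1
  funext i
  have hs : √(σ i) ≠ 0 := (Real.sqrt_pos.2 (hσ i)).ne'
  field_simp
  rw [Real.sq_sqrt (hσ i).le, sq]

end InvSqrt

end Matrix

theorem balancing_transformation_general {n : ℕ}
    (P Q K L V U : Matrix (Fin n) (Fin n) ℝ) (σ : Fin n → ℝ)
    (hPK : P = K * Kᵀ) (hQL : Q = L * Lᵀ)
    (hV : Vᵀ * V = 1)
    (hU : Uᵀ * U = 1)
    (hσ : ∀ i, 0 < σ i)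
    (hSVD : Kᵀ * L = V * Matrix.diagonal σ * Uᵀ) :
    let Sighalfinv : Matrix (Fin n) (Fin n) ℝ := Matrix.diagonal fun i => (Real.sqrt (σ i))⁻¹
    let S : Matrix (Fin n) (Fin n) ℝ := Sighalfinv * Uᵀ * Lᵀ
    let T' : Matrix (Fin n) (Fin n) ℝ := K * V * Sighalfinv
    S * T' = 1 ∧ T' * S = 1 ∧
    S * P * Sᵀ = Matrix.diagonal σ ∧ T'ᵀ * Q * T' = Matrix.diagonal σ := by
  intro D S T'
  have hA : Lᵀ * K = U * diagonal σ * Vᵀ := by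
    simpa only [transpose_mul, transpose_transpose, diagonal_transpose, Matrix.mul_assoc]
      using congrArg transpose hSVD
  have hDt : Dᵀ = D := diagonal_transpose _
  have hST : S * T' = 1 := by
    rw [show S * T' = D * (Uᵀ * (Lᵀ * K) * V) * D by simp only [S, T', Matrix.mul_assoc],
      transpose_mul_mul_eq_diagonal_of_eq_svd hU hV hA,
      diagonal_inv_sqrt_mul_diagonal_mul_diagonal_inv_sqrt hσ]
  refine ⟨hST, mul_eq_one_comm.mp hST, ?_, ?_⟩
  · rw [show S * P * Sᵀ = D * (Uᵀ * ((Lᵀ * K) * (Lᵀ * K)ᵀ) * U) * D by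
        simp only [S, hPK, hDt, transpose_mul, transpose_transpose, Matrix.mul_assoc],
      transpose_mul_mul_transpose_mul_eq_of_eq_svd hU hV hA,
      diagonal_inv_sqrt_mul_diagonal_sq_mul_diagonal_inv_sqrt hσ]
  · rw [show T'ᵀ * Q * T' = D * (Vᵀ * ((Lᵀ * K)ᵀ * (Lᵀ * K)) * V) * D by
        simp only [T', hQL, hDt, transpose_mul, transpose_transpose, Matrix.mul_assoc],
      transpose_mul_transpose_mul_mul_eq_of_eq_svd hU hV hA,
      diagonal_inv_sqrt_mul_diagonal_sq_mul_diagonal_inv_sqrt hσ]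

/-- **Balancing transformation (equation (2.12)).** Let `P = K Kᵀ` and `Q = L Lᵀ` be
symmetric positive definite with `K, L` invertible, and let `Kᵀ L = V Σ Uᵀ` be an SVD
with `V, U` orthogonal and `Σ = diagonal σ`, `σ i > 0`. Then `S = Σ^{−1/2} Uᵀ Lᵀ` and
`T' = K V Σ^{−1/2}` satisfy `S T' = I` and `T' S = I` (so `S⁻¹ = T'`), and `S` balances
the Gramians: `S P Sᵀ = Σ` and `(S⁻¹)ᵀ Q S⁻¹ = T'ᵀ Q T' = Σ`. -/
theorem balancing_transformation {n : ℕ}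
    (P Q K L V U : Matrix (Fin n) (Fin n) ℝ) (σ : Fin n → ℝ)
    (hP : P.PosDef) (hQ : Q.PosDef)
    (hPK : P = K * Kᵀ) (hQL : Q = L * Lᵀ)
    (hKinv : IsUnit K.det) (hLinv : IsUnit L.det)
    (hV : Vᵀ * V = 1) (hV' : V * Vᵀ = 1)
    (hU : Uᵀ * U = 1) (hU' : U * Uᵀ = 1)
    (hσ : ∀ i, 0 < σ i)
    (hSVD : Kᵀ * L = V * Matrix.diagonal σ * Uᵀ) :
    let Sighalfinv : Matrix (Fin n) (Fin n) ℝ := Matrix.diagonal fun i => (Real.sqrt (σ i))⁻¹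
    let S : Matrix (Fin n) (Fin n) ℝ := Sighalfinv * Uᵀ * Lᵀ
    let T' : Matrix (Fin n) (Fin n) ℝ := K * V * Sighalfinv
    S * T' = 1 ∧ T' * S = 1 ∧
    S * P * Sᵀ = Matrix.diagonal σ ∧ T'ᵀ * Q * T' = Matrix.diagonal σ :=
  balancing_transformation_general P Q K L V U σ hPK hQL hV hU hσ hSVD
end

section
/- Let 1 ≤ r < n and consider partitioned matrices A_S ∈ ℝ^{n×n}, B_S ∈ ℝ^{n×m}, C_S ∈ ℝ^{p×n}, N_{i,S} ∈ ℝ^{n×n} (i = 1,…,q) with blocks A₁₁, N_{i,11} ∈ ℝ^{r×r}, A₁₂, N_{i,12} ∈ ℝ^{r×(n−r)}, A₂₁, N_{i,21} ∈ ℝ^{(n−r)×r}, A₂₂, N_{i,22} ∈ ℝ^{(n−r)×(n−r)}, B₁ ∈ ℝ^{r×m}, B₂ ∈ ℝ^{(n−r)×m}, C₁ ∈ ℝ^{p×r}, C₂ ∈ ℝ^{p×(n−r)}, and let Σ_T = diag(Σ_{T,1}, Σ_{T,2}) be block diagonal with Σ_{T,1} ∈ ℝ^{r×r}, Σ_{T,2}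 ∈ ℝ^{(n−r)×(n−r)} symmetric. Let K = (k_{ij}) ∈ ℝ^{q×q} be symmetric. Assume: (i) A_S Σ_T + Σ_T A_Sᵀ + Σ_{i,j} k_{ij} N_{i,S} Σ_T N_{j,S}ᵀ = −B_S B_Sᵀ + F_S, where F_S ∈ ℝ^{n×n} has blocks F₁₁, F₁₂, F₂₁, F₂₂; (ii) P̄ ∈ ℝ^{r×r} satisfies A₁₁ P̄ + P̄ A₁₁ᵀ + Σ_{i,j} k_{ij} N_{i,11} P̄ N_{j,11}ᵀ = −B₁ B₁ᵀ + F̄ for some F̄ ∈ ℝ^{r×r}; (iii) Ỹ ∈ ℝ^{n×r} satisfies A_S Ỹ + Ỹ A₁₁ᵀ + Σ_{i,j} k_{ij} N_{i,S} Ỹ N_{j,11}ᵀ = −B_S B₁ᵀ + F̃_S, where F̃_S has row blocks F̃₁ ∈ ℝ^{r×r}, F̃₂ ∈ ℝ^{(n−r)×r}; (iv) Q̄ ∈ ℝ^{r×r} satisfies A₁₁ᵀ Q̄ + Q̄ A₁₁ + Σ_{i,j} k_{ij} N_{i,11}ᵀ Q̄ N_{j,11} = −C₁ᵀ C₁; (v)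 Q̃ ∈ ℝ^{r×n} satisfies A₁₁ᵀ Q̃ + Q̃ A_S + Σ_{i,j} k_{ij} N_{i,11}ᵀ Q̃ N_{j,S} = −C₁ᵀ C_S, with column blocks Q̃₁ ∈ ℝ^{r×r}, Q̃₂ ∈ ℝ^{r×(n−r)}. Then tr(C_S Σ_T C_Sᵀ) + tr(C₁ P̄ C₁ᵀ) − 2 tr(C_S Ỹ C₁ᵀ) = tr( Σ_{T,2} [ C₂ᵀ C₂ + 2 A₁₂ᵀ Q̃₂ + Σ_{i,j=1}^q k_{ij} N_{i,12}ᵀ ( 2 Q̃ [N_{j,12}; N_{j,22}] − Q̄ N_{j,12} ) ] ) + 2 tr( Q̃ [F̃₁ − F₁₁; F̃₂ − F₂₁] ) + tr( Q̄ (F₁₁ − F̄) ). -/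
/-!
For symmetric `K`, the generalized Sylvester operator
`L(X) = A X + X Bᵀ + ∑ k_ij N_i X M_jᵀ` and `L*(Q) = Bᵀ Q + Q A + ∑ k_ij M_iᵀ Q N_j` are adjoint
for the pairing `tr (Q X)`. Pairing each controllability-type equation with the matching
observability-type equation (iv) or (v) rewrites `tr (C X C₁ᵀ)` as a trace of `Q̄` or `Q̃` against
the right-hand side. For `tr (C₁ Σ_{T,1} C₁ᵀ)` this can be done twice: with `Q̄` and the leading
block of (i), and with `Q̃` and the first block column of (i). Twice the second minus the first
cancels every term in `B`, which leaves only `Σ_{T,2}` and the residuals `F`.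
-/

open Matrix

theorem sum_sum_smul_swap_of_isSymm {ι S M : Type*} [Fintype ι] [SMul S M] [AddCommMonoid M]
    {K : Matrix ι ι S} (hK : K.IsSymm) (f : ι → ι → M) :
    ∑ i, ∑ j, K i j • f j i = ∑ i, ∑ j, K i j • f i j := by
  rw [Finset.sum_comm]
  simp_rw [hK.apply]

section Sylvester

variable {R : Type*} [CommRing R] {ι a b c d : Type*} [Fintype ι] [Fintype a] [Fintype b]
  [Fintype c] [Fintype d] {K : Matrix ι ι R}

def genSylvester (K : Matrix ι ι R) (A : Matrix a a R) (N : ι → Matrix a a R)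
    (B : Matrix b b R) (M : ι → Matrix b b R) (X : Matrix a b R) : Matrix a b R :=
  A * X + X * Bᵀ + ∑ i, ∑ j, K i j • (N i * X * (M j)ᵀ)

def genSylvesterDual (K : Matrix ι ι R) (A : Matrix a a R) (N : ι → Matrix a a R)
    (B : Matrix b b R) (M : ι → Matrix b b R) (Q : Matrix b a R) : Matrix b a R :=
  Bᵀ * Q + Q * A + ∑ i, ∑ j, K i j • ((M i)ᵀ * Q * N j)

theorem trace_mul_sum_sum_smul_mul_mul_transpose (hK : K.IsSymm) (Q : Matrix b a R)
    (N : ι → Matrix a c R) (X : Matrix c d R) (M : ι → Matrix b d R) :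
    trace (Q * ∑ i, ∑ j, K i j • (N i * X * (M j)ᵀ)) =
      trace (X * ∑ i, ∑ j, K i j • ((M i)ᵀ * Q * N j)) := by
  simp only [Matrix.mul_sum, Matrix.mul_smul, trace_sum, trace_smul]
  rw [← sum_sum_smul_swap_of_isSymm hK]
  refine Finset.sum_congr rfl fun i _ => Finset.sum_congr rfl fun j _ => ?_
  rw [Matrix.mul_assoc, trace_mul_cycle', Matrix.mul_assoc, Matrix.mul_assoc]

theorem trace_mul_genSylvester (hK : K.IsSymm) (A : Matrix a a R) (N : ι → Matrix a a R)
    (B : Matrix b b R) (M : ι → Matrix b b R) (X : Matrix a b R) (Q : Matrix b a R) :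
    trace (Q * genSylvester K A N B M X) = trace (genSylvesterDual K A N B M Q * X) := by
  simp only [genSylvester, genSylvesterDual, Matrix.mul_add, Matrix.add_mul, trace_add,
    trace_mul_sum_sum_smul_mul_mul_transpose hK, trace_mul_comm X]
  rw [Matrix.mul_assoc, trace_mul_cycle' Q X, Matrix.mul_assoc]
  abel

theorem trace_mul_eq_neg_trace_mul_of_genSylvester (hK : K.IsSymm) {A : Matrix a a R}
    {N : ι → Matrix a a R} {B : Matrix b b R} {M : ι → Matrix b b R} {X G : Matrix a b R}
    {Q H : Matrix b a R} (hX : genSylvester K A N B M X = G)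
    (hQ : genSylvesterDual K A N B M Q = -H) :
    trace (H * X) = -trace (Q * G) := by
  rw [← hX, trace_mul_genSylvester hK, hQ, Matrix.neg_mul, trace_neg, neg_neg]

end Sylvester

section Blocks

variable {R : Type*} [CommRing R] {ι m₁ m₂ n : Type*} [Fintype ι] [Fintype m₁] [Fintype m₂]
  [Fintype n] [DecidableEq m₁] (K : Matrix ι ι R) (A₁₁ : Matrix m₁ m₁ R)
  (A₁₂ : Matrix m₁ m₂ R) (A₂₁ : Matrix m₂ m₁ R) (A₂₂ : Matrix m₂ m₂ R)
  (N₁₁ : ι → Matrix m₁ m₁ R) (N₁₂ : ι → Matrix m₁ m₂ R) (N₂₁ : ι → Matrix m₂ m₁ R)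
  (N₂₂ : ι → Matrix m₂ m₂ R)

theorem genSylvester_fromBlocks_diagonal_mul_fromRows_one_zero
    (S₁ : Matrix m₁ m₁ R) (S₂ : Matrix m₂ m₂ R) :
    genSylvester K (fromBlocks A₁₁ A₁₂ A₂₁ A₂₂)
        (fun i => fromBlocks (N₁₁ i) (N₁₂ i) (N₂₁ i) (N₂₂ i)) (fromBlocks A₁₁ A₁₂ A₂₁ A₂₂)
        (fun i => fromBlocks (N₁₁ i) (N₁₂ i) (N₂₁ i) (N₂₂ i)) (fromBlocks S₁ 0 0 S₂) *
        fromRows (1 : Matrix m₁ m₁ R) (0 : Matrix m₂ m₁ R) =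
      genSylvester K (fromBlocks A₁₁ A₁₂ A₂₁ A₂₂)
          (fun i => fromBlocks (N₁₁ i) (N₁₂ i) (N₂₁ i) (N₂₂ i)) A₁₁ N₁₁
          (fromRows S₁ (0 : Matrix m₂ m₁ R)) +
        (fromRows (0 : Matrix m₁ m₁ R) (S₂ * A₁₂ᵀ) +
          ∑ i, ∑ j, K i j • (fromRows (N₁₂ i) (N₂₂ i) * S₂ * (N₁₂ j)ᵀ)) := by
  simp only [genSylvester, Matrix.add_mul, Matrix.sum_mul, Matrix.smul_mul, Matrix.mul_assoc,
    fromBlocks_transpose, fromBlocks_mul_fromRows, fromRows_mul, Matrix.mul_one,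
    Matrix.mul_zero, Matrix.zero_mul, add_zero, zero_add]
  ext (i | i) j <;> simp [Matrix.sum_apply, Finset.sum_add_distrib, mul_add] <;> abel

theorem fromCols_one_zero_mul_genSylvester_fromRows_zero (B : Matrix n n R)
    (M : ι → Matrix n n R) (X : Matrix m₁ n R) :
    fromCols (1 : Matrix m₁ m₁ R) (0 : Matrix m₁ m₂ R) *
        genSylvester K (fromBlocks A₁₁ A₁₂ A₂₁ A₂₂)
          (fun i => fromBlocks (N₁₁ i) (N₁₂ i) (N₂₁ i) (N₂₂ i)) B M (fromRows X 0) =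
      genSylvester K A₁₁ N₁₁ B M X := by
  simp [genSylvester, Matrix.mul_add, Matrix.mul_sum, ← Matrix.mul_assoc,
    fromCols_mul_fromBlocks, fromCols_mul_fromRows]

variable {K A₁₁ A₁₂ A₂₁ A₂₂ N₁₁ N₁₂ N₂₁ N₂₂} {l : Type*} [Fintype l] {S₁ : Matrix m₁ m₁ R} {S₂ : Matrix m₂ m₂ R}
  {B₁ : Matrix m₁ l R} {B₂ : Matrix m₂ l R} {F₁₁ : Matrix m₁ m₁ R} {F₁₂ : Matrix m₁ m₂ R}
  {F₂₁ : Matrix m₂ m₁ R} {F₂₂ : Matrix m₂ m₂ R}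

theorem genSylvester_fromRows_zero_eq_of_fromBlocks_diagonal
    (h : genSylvester K (fromBlocks A₁₁ A₁₂ A₂₁ A₂₂)
        (fun i => fromBlocks (N₁₁ i) (N₁₂ i) (N₂₁ i) (N₂₂ i)) (fromBlocks A₁₁ A₁₂ A₂₁ A₂₂)
        (fun i => fromBlocks (N₁₁ i) (N₁₂ i) (N₂₁ i) (N₂₂ i)) (fromBlocks S₁ 0 0 S₂) =
      -(fromRows B₁ B₂ * (fromRows B₁ B₂)ᵀ) + fromBlocks F₁₁ F₁₂ F₂₁ F₂₂) :
    genSylvester K (fromBlocks A₁₁ A₁₂ A₂₁ A₂₂)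
        (fun i => fromBlocks (N₁₁ i) (N₁₂ i) (N₂₁ i) (N₂₂ i)) A₁₁ N₁₁ (fromRows S₁ 0) =
      -(fromRows B₁ B₂ * B₁ᵀ) + fromRows F₁₁ F₂₁ - (fromRows 0 (S₂ * A₁₂ᵀ) +
        ∑ i, ∑ j, K i j • (fromRows (N₁₂ i) (N₂₂ i) * S₂ * (N₁₂ j)ᵀ)) := by
  refine eq_sub_of_add_eq ?_
  rw [← genSylvester_fromBlocks_diagonal_mul_fromRows_one_zero, h]
  simp [Matrix.add_mul, transpose_fromRows, fromBlocks_mul_fromRows]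

theorem genSylvester_eq_of_fromBlocks_diagonal
    (h : genSylvester K (fromBlocks A₁₁ A₁₂ A₂₁ A₂₂)
        (fun i => fromBlocks (N₁₁ i) (N₁₂ i) (N₂₁ i) (N₂₂ i)) (fromBlocks A₁₁ A₁₂ A₂₁ A₂₂)
        (fun i => fromBlocks (N₁₁ i) (N₁₂ i) (N₂₁ i) (N₂₂ i)) (fromBlocks S₁ 0 0 S₂) =
      -(fromRows B₁ B₂ * (fromRows B₁ B₂)ᵀ) + fromBlocks F₁₁ F₁₂ F₂₁ F₂₂) :
    genSylvester K A₁₁ N₁₁ A₁₁ N₁₁ S₁ =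
      -(B₁ * B₁ᵀ) + F₁₁ - ∑ i, ∑ j, K i j • (N₁₂ i * S₂ * (N₁₂ j)ᵀ) := by
  rw [← fromCols_one_zero_mul_genSylvester_fromRows_zero K A₁₁ A₁₂ A₂₁ A₂₂ N₁₁ N₁₂ N₂₁ N₂₂,
    genSylvester_fromRows_zero_eq_of_fromBlocks_diagonal h]
  simp [Matrix.mul_add, Matrix.mul_sub, Matrix.mul_sum, ← Matrix.mul_assoc, fromCols_mul_fromRows]

end Blocks

theorem error_bound_trace_identity_general {r s m p q : ℕ}
    (A11 : Matrix (Fin r) (Fin r) ℝ) (A12 : Matrix (Fin r) (Fin s) ℝ)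
    (A21 : Matrix (Fin s) (Fin r) ℝ) (A22 : Matrix (Fin s) (Fin s) ℝ)
    (N11 : Fin q → Matrix (Fin r) (Fin r) ℝ) (N12 : Fin q → Matrix (Fin r) (Fin s) ℝ)
    (N21 : Fin q → Matrix (Fin s) (Fin r) ℝ) (N22 : Fin q → Matrix (Fin s) (Fin s) ℝ)
    (B1 : Matrix (Fin r) (Fin m) ℝ) (B2 : Matrix (Fin s) (Fin m) ℝ)
    (C1 : Matrix (Fin p) (Fin r) ℝ) (C2 : Matrix (Fin p) (Fin s) ℝ)
    (Sig1 : Matrix (Fin r) (Fin r) ℝ) (Sig2 : Matrix (Fin s) (Fin s) ℝ)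
    (K : Matrix (Fin q) (Fin q) ℝ) (hK : K.IsSymm)
    (F11 : Matrix (Fin r) (Fin r) ℝ) (F12 : Matrix (Fin r) (Fin s) ℝ)
    (F21 : Matrix (Fin s) (Fin r) ℝ) (F22 : Matrix (Fin s) (Fin s) ℝ)
    (Pbar Fbar : Matrix (Fin r) (Fin r) ℝ)
    (Ytil : Matrix (Fin r ⊕ Fin s) (Fin r) ℝ)
    (Ftil1 : Matrix (Fin r) (Fin r) ℝ) (Ftil2 : Matrix (Fin s) (Fin r) ℝ)
    (Qbar : Matrix (Fin r) (Fin r) ℝ)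
    (Qtil1 : Matrix (Fin r) (Fin r) ℝ) (Qtil2 : Matrix (Fin r) (Fin s) ℝ)
    -- (i) the balanced Gramian equation
    (hi :
      (fromBlocks A11 A12 A21 A22) * (fromBlocks Sig1 0 0 Sig2) +
        (fromBlocks Sig1 0 0 Sig2) * (fromBlocks A11 A12 A21 A22)ᵀ +
        ∑ i, ∑ j, K i j •
          ((fromBlocks (N11 i) (N12 i) (N21 i) (N22 i)) * (fromBlocks Sig1 0 0 Sig2) *
            (fromBlocks (N11 j) (N12 j) (N21 j) (N22 j))ᵀ) =
      -((fromRows B1 B2) * (fromRows B1 B2)ᵀ) + fromBlocks F11 F12 F21 F22)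
    -- (ii) the reduced-order Gramian equation
    (hii :
      A11 * Pbar + Pbar * A11ᵀ + ∑ i, ∑ j, K i j • (N11 i * Pbar * (N11 j)ᵀ) =
        -(B1 * B1ᵀ) + Fbar)
    -- (iii) the mixed (cross) Gramian equation
    (hiii :
      (fromBlocks A11 A12 A21 A22) * Ytil + Ytil * A11ᵀ +
        ∑ i, ∑ j, K i j •
          ((fromBlocks (N11 i) (N12 i) (N21 i) (N22 i)) * Ytil * (N11 j)ᵀ) =
      -((fromRows B1 B2) * B1ᵀ) + fromRows Ftil1 Ftil2)
    -- (iv) the reduced observability-type equation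
    (hiv :
      A11ᵀ * Qbar + Qbar * A11 + ∑ i, ∑ j, K i j • ((N11 i)ᵀ * Qbar * N11 j) =
        -(C1ᵀ * C1))
    -- (v) the mixed observability-type equation
    (hv :
      A11ᵀ * (fromCols Qtil1 Qtil2) +
        (fromCols Qtil1 Qtil2) * (fromBlocks A11 A12 A21 A22) +
        ∑ i, ∑ j, K i j •
          ((N11 i)ᵀ * (fromCols Qtil1 Qtil2) *
            (fromBlocks (N11 j) (N12 j) (N21 j) (N22 j))) =
      -(C1ᵀ * (fromCols C1 C2))) :
    Matrix.trace ((fromCols C1 C2) * (fromBlocks Sig1 0 0 Sig2) * (fromCols C1 C2)ᵀ) +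
      Matrix.trace (C1 * Pbar * C1ᵀ) -
      2 * Matrix.trace ((fromCols C1 C2) * Ytil * C1ᵀ) =
    Matrix.trace (Sig2 *
      (C2ᵀ * C2 + (2:ℝ) • (A12ᵀ * Qtil2) +
        ∑ i, ∑ j, K i j •
          ((N12 i)ᵀ *
            ((2:ℝ) • ((fromCols Qtil1 Qtil2) * fromRows (N12 j) (N22 j)) -
              Qbar * N12 j)))) +
    2 * Matrix.trace ((fromCols Qtil1 Qtil2) * fromRows (Ftil1 - F11) (Ftil2 - F21)) +
    Matrix.trace (Qbar * (F11 - Fbar)) := by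
  have hcol := genSylvester_fromRows_zero_eq_of_fromBlocks_diagonal hi
  have hlead := genSylvester_eq_of_fromBlocks_diagonal hi
  have hPbar := trace_mul_eq_neg_trace_mul_of_genSylvester hK hii hiv
  have hYtil := trace_mul_eq_neg_trace_mul_of_genSylvester hK hiii hv
  have hSig1bar := trace_mul_eq_neg_trace_mul_of_genSylvester hK hlead hiv
  have hSig1til := trace_mul_eq_neg_trace_mul_of_genSylvester hK hcol hv
  rw [← trace_mul_cycle] at hPbar hYtil hSig1bar hSig1til
  have hsum : ∑ i, ∑ j, K i j • ((N12 i)ᵀ *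
      ((2:ℝ) • (fromCols Qtil1 Qtil2 * fromRows (N12 j) (N22 j)) - Qbar * N12 j)) =
      (2:ℝ) • ∑ i, ∑ j, K i j • ((N12 i)ᵀ * fromCols Qtil1 Qtil2 * fromRows (N12 j) (N22 j)) -
        ∑ i, ∑ j, K i j • ((N12 i)ᵀ * Qbar * N12 j) := by
    simp only [Matrix.mul_sub, Matrix.mul_smul, smul_sub, Finset.sum_sub_distrib,
      Finset.smul_sum, smul_comm (2:ℝ), Matrix.mul_assoc]
  rw [hsum]
  simp only [Matrix.mul_add, Matrix.mul_sub, Matrix.mul_neg, Matrix.mul_smul, trace_add,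
    trace_sub, trace_neg, trace_smul, trace_mul_sum_sum_smul_mul_mul_transpose hK]
    at hPbar hYtil hSig1bar hSig1til ⊢
  simp only [fromCols_mul_fromBlocks, transpose_fromCols, fromCols_mul_fromRows, fromRows_mul,
    Matrix.mul_zero, add_zero, zero_add, Matrix.mul_sub, trace_add, trace_sub,
    smul_eq_mul] at hPbar hYtil hSig1bar hSig1til ⊢
  have hC2 : trace (C2 * Sig2 * C2ᵀ) = trace (Sig2 * (C2ᵀ * C2)) := by
    rw [trace_mul_cycle, trace_mul_comm]
  have hA12 : trace (Qtil2 * (Sig2 * A12ᵀ)) = trace (Sig2 * (A12ᵀ * Qtil2)) := by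
    rw [trace_mul_comm, Matrix.mul_assoc]
  linarith

/-- **Theorem 3.1 (algebraic content).** With the partitioned balanced realization
`(A_S, B_S, C_S, N_{i,S})`, the balanced Gramian `Σ_T = diag(Σ_{T,1}, Σ_{T,2})` and the
solutions `P̄, Ỹ, Q̄, Q̃` of the auxiliary generalized Lyapunov/Sylvester equations,
the squared error-bound constant
`ε² = tr(C_S Σ_T C_Sᵀ) + tr(C₁ P̄ C₁ᵀ) − 2 tr(C_S Ỹ C₁ᵀ)` equals the stated
expression in the truncated block `Σ_{T,2}` and the covariance-error terms. -/
theorem error_bound_trace_identity {r s m p q : ℕ} (hr : 0 < r) (hs : 0 < s)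
    (A11 : Matrix (Fin r) (Fin r) ℝ) (A12 : Matrix (Fin r) (Fin s) ℝ)
    (A21 : Matrix (Fin s) (Fin r) ℝ) (A22 : Matrix (Fin s) (Fin s) ℝ)
    (N11 : Fin q → Matrix (Fin r) (Fin r) ℝ) (N12 : Fin q → Matrix (Fin r) (Fin s) ℝ)
    (N21 : Fin q → Matrix (Fin s) (Fin r) ℝ) (N22 : Fin q → Matrix (Fin s) (Fin s) ℝ)
    (B1 : Matrix (Fin r) (Fin m) ℝ) (B2 : Matrix (Fin s) (Fin m) ℝ)
    (C1 : Matrix (Fin p) (Fin r) ℝ) (C2 : Matrix (Fin p) (Fin s) ℝ)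
    (Sig1 : Matrix (Fin r) (Fin r) ℝ) (Sig2 : Matrix (Fin s) (Fin s) ℝ)
    (hSig1 : Sig1.IsSymm) (hSig2 : Sig2.IsSymm)
    (K : Matrix (Fin q) (Fin q) ℝ) (hK : K.IsSymm)
    (F11 : Matrix (Fin r) (Fin r) ℝ) (F12 : Matrix (Fin r) (Fin s) ℝ)
    (F21 : Matrix (Fin s) (Fin r) ℝ) (F22 : Matrix (Fin s) (Fin s) ℝ)
    (Pbar Fbar : Matrix (Fin r) (Fin r) ℝ)
    (Ytil : Matrix (Fin r ⊕ Fin s) (Fin r) ℝ)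
    (Ftil1 : Matrix (Fin r) (Fin r) ℝ) (Ftil2 : Matrix (Fin s) (Fin r) ℝ)
    (Qbar : Matrix (Fin r) (Fin r) ℝ)
    (Qtil1 : Matrix (Fin r) (Fin r) ℝ) (Qtil2 : Matrix (Fin r) (Fin s) ℝ)
    -- (i) the balanced Gramian equation
    (hi :
      (fromBlocks A11 A12 A21 A22) * (fromBlocks Sig1 0 0 Sig2) +
        (fromBlocks Sig1 0 0 Sig2) * (fromBlocks A11 A12 A21 A22)ᵀ +
        ∑ i, ∑ j, K i j •
          ((fromBlocks (N11 i) (N12 i) (N21 i) (N22 i)) * (fromBlocks Sig1 0 0 Sig2) *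
            (fromBlocks (N11 j) (N12 j) (N21 j) (N22 j))ᵀ) =
      -((fromRows B1 B2) * (fromRows B1 B2)ᵀ) + fromBlocks F11 F12 F21 F22)
    -- (ii) the reduced-order Gramian equation
    (hii :
      A11 * Pbar + Pbar * A11ᵀ + ∑ i, ∑ j, K i j • (N11 i * Pbar * (N11 j)ᵀ) =
        -(B1 * B1ᵀ) + Fbar)
    -- (iii) the mixed (cross) Gramian equation
    (hiii :
      (fromBlocks A11 A12 A21 A22) * Ytil + Ytil * A11ᵀ +
        ∑ i, ∑ j, K i j •
          ((fromBlocks (N11 i) (N12 i) (N21 i) (N22 i)) * Ytil * (N11 j)ᵀ) =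
      -((fromRows B1 B2) * B1ᵀ) + fromRows Ftil1 Ftil2)
    -- (iv) the reduced observability-type equation
    (hiv :
      A11ᵀ * Qbar + Qbar * A11 + ∑ i, ∑ j, K i j • ((N11 i)ᵀ * Qbar * N11 j) =
        -(C1ᵀ * C1))
    -- (v) the mixed observability-type equation
    (hv :
      A11ᵀ * (fromCols Qtil1 Qtil2) +
        (fromCols Qtil1 Qtil2) * (fromBlocks A11 A12 A21 A22) +
        ∑ i, ∑ j, K i j •
          ((N11 i)ᵀ * (fromCols Qtil1 Qtil2) *
            (fromBlocks (N11 j) (N12 j) (N21 j) (N22 j))) =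
      -(C1ᵀ * (fromCols C1 C2))) :
    Matrix.trace ((fromCols C1 C2) * (fromBlocks Sig1 0 0 Sig2) * (fromCols C1 C2)ᵀ) +
      Matrix.trace (C1 * Pbar * C1ᵀ) -
      2 * Matrix.trace ((fromCols C1 C2) * Ytil * C1ᵀ) =
    Matrix.trace (Sig2 *
      (C2ᵀ * C2 + (2:ℝ) • (A12ᵀ * Qtil2) +
        ∑ i, ∑ j, K i j •
          ((N12 i)ᵀ *
            ((2:ℝ) • ((fromCols Qtil1 Qtil2) * fromRows (N12 j) (N22 j)) -
              Qbar * N12 j)))) +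
    2 * Matrix.trace ((fromCols Qtil1 Qtil2) * fromRows (Ftil1 - F11) (Ftil2 - F21)) +
    Matrix.trace (Qbar * (F11 - Fbar)) :=
  error_bound_trace_identity_general A11 A12 A21 A22 N11 N12 N21 N22 B1 B2 C1 C2 Sig1 Sig2 K hK F11
    F12 F21 F22 Pbar Fbar Ytil Ftil1 Ftil2 Qbar Qtil1 Qtil2 hi hii hiii hiv hv
end
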